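/- arXiv:1207.1781 — 7 statements merged into one kernel-verified Lean document; each statement's English description precedes it below -/
import Mathlib

section
/- Let G be a finite commutative group with |G| = q and let A ⊆ G be a standard set. Then 1/q ≤ δ(A) ≤ λ⁻(A) ≤ λ(A) ≤ λ⁺(A) ≤ δ̄(A) ≤ 1, and moreover λ⁻(A) ≤ λ±(A) ≤ λ⁺(A). -/
open scoped Pointwise ComplexOrder

noncomputable section

def IsStandard {G : Type*} [AddCommGroup G] (A : Set G) : Prop :=
  A = -A ∧ (0 : G) ∈ A

def Delta {G : Type*} [AddCommGroup G] (A : Set G) : ℕ :=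
  sSup {n | ∃ B : Finset G, ((B : Set G) - (B : Set G)) ∩ A = {0} ∧ B.card = n}

def DeltaBar {G : Type*} [AddCommGroup G] (A : Set G) : ℕ :=
  sSup {n | ∃ B : Finset G, ((B : Set G) - (B : Set G)) ⊆ A ∧ B.card = n}

def deltaL {G : Type*} [AddCommGroup G] [Fintype G] (A : Set G) : ℝ :=
  (Delta A : ℝ) / (Fintype.card G : ℝ)

def deltaU {G : Type*} [AddCommGroup G] (A : Set G) : ℝ :=
  1 / (DeltaBar A : ℝ)

def ftrans {G : Type*} [AddCommGroup G] [Fintype G] (f : G → ℝ) (γ : AddChar G Circle) : ℂ :=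
  ∑ x, (γ x : ℂ) * (f x : ℂ)

def PosFT {G : Type*} [AddCommGroup G] [Fintype G] (f : G → ℝ) : Prop :=
  ∀ γ : AddChar G Circle, 0 ≤ ftrans f γ

def lamSet {G : Type*} [AddCommGroup G] [Fintype G] (S : Set (G → ℝ)) : Set ℝ :=
  {r | ∃ f ∈ S, PosFT f ∧ (∑ x, f x) ≠ 0 ∧ r = f 0 / ∑ x, f x}

def lam {G : Type*} [AddCommGroup G] [Fintype G] (A : Set G) : ℝ :=
  sInf (lamSet {f | f ≠ 0 ∧ ∀ x ∉ A, f x = 0})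

def lamMinus {G : Type*} [AddCommGroup G] [Fintype G] (A : Set G) : ℝ :=
  sInf (lamSet {f | f ≠ 0 ∧ ∀ x ∉ A, f x ≤ 0})

def lamPlus {G : Type*} [AddCommGroup G] [Fintype G] (A : Set G) : ℝ :=
  sInf (lamSet {f | f ≠ 0 ∧ (∀ x ∉ A, f x = 0) ∧ ∀ x ∈ A, 0 ≤ f x})

def lamPM {G : Type*} [AddCommGroup G] [Fintype G] (A : Set G) : ℝ :=
  sInf (lamSet {f | f ≠ 0 ∧ (∀ x ∉ A, f x ≤ 0) ∧ ∀ x ∈ A, 0 ≤ f x})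

namespace StdAux

variable {G : Type*} [AddCommGroup G] [Fintype G]

noncomputable instance : Fintype (AddChar G Circle) :=
  Fintype.ofEquiv _ AddChar.circleEquivComplex.symm.toEquiv

omit [Fintype G] in
lemma coe_neg (γ : AddChar G Circle) (a : G) :
    ((γ (-a) : ℂ)) = starRingEnd ℂ (γ a : ℂ) := by
  rw [AddChar.map_neg_eq_inv, Circle.coe_inv_eq_conj]

omit [Fintype G] in
lemma coe_add (γ : AddChar G Circle) (a b : G) :
    ((γ (a + b) : ℂ)) = (γ a : ℂ) * (γ b : ℂ) := by
  rw [AddChar.map_add_eq_mul]; simp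

lemma orth [DecidableEq G] (a : G) :
    ∑ γ : AddChar G Circle, ((γ a : ℂ)) = if a = 0 then (Fintype.card G : ℂ) else 0 := by
  rw [← AddChar.sum_apply_eq_ite a]
  exact Fintype.sum_equiv AddChar.circleEquivComplex.toEquiv _ _ (fun γ => rfl)

lemma ftrans_re {f : G → ℝ} (hf : PosFT f) (γ : AddChar G Circle) :
    0 ≤ (ftrans f γ).re ∧ (ftrans f γ).im = 0 := by
  have := hf γ
  rw [Complex.le_def] at this
  exact ⟨by simpa using this.1, by simpa using this.2.symm⟩

lemma psd {f : G → ℝ} (hf : PosFT f) (v : G → ℝ) :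
    0 ≤ ∑ x : G, ∑ y : G, v x * v y * f (x - y) := by
  classical
  have hq0 : 0 < (Fintype.card G : ℝ) := by exact_mod_cast Fintype.card_pos
  set w : AddChar G Circle → ℂ := fun γ => ∑ x : G, (γ x : ℂ) * v x with hw
  have step1 : ∀ γ : AddChar G Circle,
      ftrans f γ * (starRingEnd ℂ (w γ) * w γ) =
        ∑ z : G, ∑ x : G, ∑ y : G, (γ (z - x + y) : ℂ) * ((f z : ℂ) * v x * v y) := by
    intro γ
    have hconj : starRingEnd ℂ (w γ) = ∑ x : G, (γ (-x) : ℂ) * v x := by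
      rw [hw]
      simp only [map_sum, map_mul, ← coe_neg]
      congr 1; ext x; rw [Complex.conj_ofReal]
    rw [ftrans, hconj, hw]
    rw [Finset.sum_mul_sum]
    rw [Finset.sum_mul_sum]
    simp only [Finset.mul_sum]
    refine Finset.sum_congr rfl fun z _ => Finset.sum_congr rfl fun x _ =>
      Finset.sum_congr rfl fun y _ => ?_
    rw [show z - x + y = z + -x + y from by abel, coe_add, coe_add]
    ring
  have step2 : (∑ γ : AddChar G Circle, ftrans f γ * (starRingEnd ℂ (w γ) * w γ)) =
      (Fintype.card G : ℂ) * ((∑ x : G, ∑ y : G, v x * v y * f (x - y) : ℝ) : ℂ) := by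
    simp only [step1]
    rw [Finset.sum_comm]
    have hxin : ∀ z : G,
        (∑ γ : AddChar G Circle, ∑ x : G, ∑ y : G, (γ (z - x + y) : ℂ) * ((f z : ℂ) * v x * v y))
        = ∑ x : G, ∑ y : G, (if z - x + y = 0 then (Fintype.card G : ℂ) else 0) * ((f z : ℂ) * v x * v y) := by
      intro z
      rw [Finset.sum_comm]
      refine Finset.sum_congr rfl fun x _ => ?_
      rw [Finset.sum_comm]
      refine Finset.sum_congr rfl fun y _ => ?_
      rw [← Finset.sum_mul, orth]
    simp only [hxin]
    rw [Finset.sum_comm]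
    push_cast
    rw [Finset.mul_sum]
    refine Finset.sum_congr rfl fun x _ => ?_
    rw [Finset.sum_comm, Finset.mul_sum]
    refine Finset.sum_congr rfl fun y _ => ?_
    have hcond : ∀ z : G, (z - x + y = 0) = (z = x - y) := fun z => by
      rw [show z - x + y = z - (x - y) from by abel, sub_eq_zero]
    simp only [hcond, ite_mul, zero_mul]
    rw [Finset.sum_ite_eq' Finset.univ (x - y)]
    simp only [Finset.mem_univ, if_true]
    ring
  have hTre : 0 ≤ (∑ γ : AddChar G Circle, ftrans f γ * (starRingEnd ℂ (w γ) * w γ)).re := by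
    rw [Complex.re_sum]
    refine Finset.sum_nonneg fun γ _ => ?_
    have h1 : starRingEnd ℂ (w γ) * w γ = ((Complex.normSq (w γ) : ℝ) : ℂ) := by
      rw [mul_comm, Complex.mul_conj]
    rw [h1, Complex.mul_re, Complex.ofReal_re, Complex.ofReal_im, mul_zero, sub_zero]
    exact mul_nonneg (ftrans_re hf γ).1 (Complex.normSq_nonneg _)
  rw [step2] at hTre
  have : 0 ≤ (Fintype.card G : ℝ) * (∑ x : G, ∑ y : G, v x * v y * f (x - y)) := by
    simpa using hTre
  nlinarith

lemma sum_pos {f : G → ℝ} (hf : PosFT f) (hs : (∑ x, f x) ≠ 0) : 0 < ∑ x, f x := by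
  have h1 : ftrans f 1 = ((∑ x, f x : ℝ) : ℂ) := by
    rw [ftrans]
    push_cast
    simp
  have := hf 1
  rw [h1, Complex.le_def] at this
  have h2 : 0 ≤ ∑ x, f x := by simpa using this.1
  exact lt_of_le_of_ne h2 (Ne.symm hs)

lemma apply_zero_nonneg {f : G → ℝ} (hf : PosFT f) : 0 ≤ f 0 := by
  classical
  have := psd hf (fun z => if z = 0 then 1 else 0)
  simpa using this

lemma ind_sum [DecidableEq G] (B : Finset G) (g : G → ℝ) :
    ∑ x : G, (if x ∈ B then (1:ℝ) else 0) * g x = ∑ x ∈ B, g x := by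
  simp only [ite_mul, one_mul, zero_mul]
  rw [Finset.sum_ite_mem, Finset.univ_inter]

lemma key {A : Set G} (f : G → ℝ) (hle : ∀ x ∉ A, f x ≤ 0)
    (hpos : PosFT f) (hs : (∑ x, f x) ≠ 0) (B : Finset G)
    (hB : ((B : Set G) - (B : Set G)) ∩ A = {0}) :
    (B.card : ℝ) / (Fintype.card G : ℝ) ≤ f 0 / ∑ x, f x := by
  classical
  set q := (Fintype.card G : ℝ) with hqdef
  have hq0 : 0 < q := by rw [hqdef]; exact_mod_cast Fintype.card_pos
  set s := ∑ x, f x with hsdef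
  have hs0 : 0 < s := sum_pos hpos hs
  have hf0 : 0 ≤ f 0 := apply_zero_nonneg hpos
  rcases Nat.eq_zero_or_pos B.card with hc | hc
  · rw [hc]
    simpa using div_nonneg hf0 hs0.le
  set c := (B.card : ℝ) with hcdef
  have hc0 : 0 < c := by rw [hcdef]; exact_mod_cast hc
  set v : G → ℝ := fun z => q * (if z ∈ B then 1 else 0) - c with hvdef
  have hpsd := psd hpos v
  have hrow : ∀ x : G, ∑ y : G, f (x - y) = s :=
    fun x => Fintype.sum_equiv (Equiv.subLeft x) _ _ (fun y => rfl)
  have hcol : ∀ y : G, ∑ x : G, f (x - y) = s :=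
    fun y => Fintype.sum_equiv (Equiv.subRight y) _ _ (fun x => rfl)
  set S := ∑ x ∈ B, ∑ y ∈ B, f (x - y) with hSdef
  have T1 : ∑ x : G,
      (if x ∈ B then (1:ℝ) else 0) * ∑ y : G, ((if y ∈ B then (1:ℝ) else 0) * f (x - y)) = S := by
    calc ∑ x : G, (if x ∈ B then (1:ℝ) else 0) * ∑ y : G, (if y ∈ B then (1:ℝ) else 0) * f (x - y)
        = ∑ x : G, (if x ∈ B then (1:ℝ) else 0) * ∑ y ∈ B, f (x - y) := by
          simp only [ind_sum]
      _ = S := ind_sum B _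
  have T2 : ∑ x : G, (if x ∈ B then (1:ℝ) else 0) * ∑ y : G, f (x - y) = c * s := by
    calc ∑ x : G, (if x ∈ B then (1:ℝ) else 0) * ∑ y : G, f (x - y)
        = ∑ x ∈ B, ∑ y : G, f (x - y) := ind_sum B _
      _ = ∑ _x ∈ B, s := by simp only [hrow]
      _ = c * s := by rw [Finset.sum_const, nsmul_eq_mul]
  have T3 : ∑ x : G, ∑ y : G, (if y ∈ B then (1:ℝ) else 0) * f (x - y) = c * s := by
    rw [Finset.sum_comm]
    calc ∑ y : G, ∑ x : G, (if y ∈ B then (1:ℝ) else 0) * f (x - y)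
        = ∑ y : G, (if y ∈ B then (1:ℝ) else 0) * ∑ x : G, f (x - y) := by
          simp only [Finset.mul_sum]
      _ = ∑ y ∈ B, ∑ x : G, f (x - y) := ind_sum B _
      _ = ∑ _y ∈ B, s := by simp only [hcol]
      _ = c * s := by rw [Finset.sum_const, nsmul_eq_mul]
  have T4 : ∑ x : G, ∑ y : G, f (x - y) = q * s := by
    simp only [hrow, Finset.sum_const, nsmul_eq_mul, Finset.card_univ, hqdef]
  have expand : ∑ x : G, ∑ y : G, v x * v y * f (x - y) = q^2 * S - q * c^2 * s := by
    have e1 : ∀ x y : G, v x * v y * f (x - y) =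
        q^2 * ((if x ∈ B then (1:ℝ) else 0) * ((if y ∈ B then (1:ℝ) else 0) * f (x - y)))
        - q * c * ((if x ∈ B then (1:ℝ) else 0) * f (x - y))
        - q * c * ((if y ∈ B then (1:ℝ) else 0) * f (x - y))
        + c^2 * f (x - y) := by
      intro x y; simp only [hvdef]; ring
    simp only [e1]
    simp only [Finset.sum_add_distrib, Finset.sum_sub_distrib, ← Finset.mul_sum]
    rw [T1, T2, T3, T4]
    ring
  rw [expand] at hpsd
  have hterm : ∀ x ∈ B, ∑ y ∈ B, f (x - y) ≤ f 0 := by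
    intro x hx
    have hsplit : ∑ y ∈ B, f (x - y) = f 0 + ∑ y ∈ B.erase x, f (x - y) := by
      rw [← Finset.add_sum_erase B _ hx, sub_self]
    rw [hsplit]
    have hneg : ∑ y ∈ B.erase x, f (x - y) ≤ 0 := by
      refine Finset.sum_nonpos fun y hy => ?_
      have hyB := Finset.mem_of_mem_erase hy
      have hyx : y ≠ x := Finset.ne_of_mem_erase hy
      apply hle
      intro hxA
      have hmem : x - y ∈ ((B : Set G) - (B : Set G)) ∩ A :=
        ⟨Set.sub_mem_sub (by exact_mod_cast hx) (by exact_mod_cast hyB), hxA⟩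
      rw [hB] at hmem
      exact hyx ((sub_eq_zero.mp hmem).symm)
    linarith
  have hS : S ≤ c * f 0 := by
    calc S ≤ ∑ _x ∈ B, f 0 := Finset.sum_le_sum hterm
      _ = c * f 0 := by rw [Finset.sum_const, nsmul_eq_mul]
  rw [div_le_div_iff₀ hq0 hs0]
  have h2 : q^2 * S ≤ q^2 * (c * f 0) := mul_le_mul_of_nonneg_left hS (by positivity)
  have hqc : 0 < q * c := mul_pos hq0 hc0
  have h5 : (q * c) * (c * s) ≤ (q * c) * (f 0 * q) := by nlinarith [hpsd, h2]
  exact le_of_mul_le_mul_left h5 hqc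

lemma delta0_mem {A : Set G} (h0 : (0:G) ∈ A) :
    (1:ℝ) ∈ lamSet {f | f ≠ 0 ∧ (∀ x ∉ A, f x = 0) ∧ ∀ x ∈ A, 0 ≤ f x} := by
  classical
  refine ⟨fun x => if x = 0 then 1 else 0, ⟨?_, ?_, ?_⟩, ?_, ?_, ?_⟩
  · intro h
    have := congrFun h 0
    simp at this
  · intro x hx
    have : x ≠ 0 := fun h => hx (h ▸ h0)
    simp [this]
  · intro x _
    by_cases hx : x = 0 <;> simp [hx]
  · intro γ
    have : ftrans (fun x => if x = 0 then (1:ℝ) else 0) γ = 1 := by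
      rw [ftrans]
      push_cast
      simp only [apply_ite, Complex.ofReal_one, Complex.ofReal_zero, mul_ite, mul_one, mul_zero]
      rw [Finset.sum_ite_eq' Finset.univ (0:G)]
      simp
    rw [this]
    exact zero_le_one
  · simp
  · simp

lemma auto_mem {A : Set G} (B : Finset G) (hBA : ((B : Set G) - (B : Set G)) ⊆ A)
    (hc : 0 < B.card) :
    (1 / (B.card : ℝ)) ∈ lamSet {f | f ≠ 0 ∧ (∀ x ∉ A, f x = 0) ∧ ∀ x ∈ A, 0 ≤ f x} := by
  classical
  set f : G → ℝ := fun x => ∑ b ∈ B, ∑ b' ∈ B, if b - b' = x then (1:ℝ) else 0 with hfdef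
  have hc0 : (0:ℝ) < (B.card : ℝ) := by exact_mod_cast hc
  have hf0 : f 0 = B.card := by
    rw [hfdef]
    simp only [sub_eq_zero]
    simp [Finset.sum_ite_eq]
  have hsum : ∑ x, f x = (B.card : ℝ) * (B.card : ℝ) := by
    rw [hfdef]
    rw [Finset.sum_comm]
    have h1 : ∀ b ∈ B, ∑ x : G, ∑ b' ∈ B, (if b - b' = x then (1:ℝ) else 0)
        = ∑ _b' ∈ B, (1:ℝ) := by
      intro b _
      rw [Finset.sum_comm]
      refine Finset.sum_congr rfl fun b' _ => ?_
      rw [Finset.sum_ite_eq Finset.univ (b - b') (fun _ => (1:ℝ))]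
      simp
    rw [Finset.sum_congr rfl h1]
    simp [mul_comm]
  have hnonneg : ∀ x, 0 ≤ f x := by
    intro x
    refine Finset.sum_nonneg fun b _ => Finset.sum_nonneg fun b' _ => ?_
    split <;> norm_num
  have hsupp : ∀ x ∉ A, f x = 0 := by
    intro x hx
    rw [hfdef]
    refine Finset.sum_eq_zero fun b hb => Finset.sum_eq_zero fun b' hb' => ?_
    rw [if_neg]
    intro h
    exact hx (h ▸ hBA (Set.sub_mem_sub (by exact_mod_cast hb) (by exact_mod_cast hb')))
  have hfne : f ≠ 0 := by
    intro h
    have := congrFun h 0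
    rw [hf0] at this
    simp only [Pi.zero_apply] at this
    exact absurd this (by positivity)
  refine ⟨f, ⟨hfne, hsupp, fun x _ => hnonneg x⟩, ?_, ?_, ?_⟩
  · intro γ
    have hfx : ∀ x : G, ((f x : ℝ) : ℂ) = ∑ b ∈ B, ∑ b' ∈ B, (if b - b' = x then (1:ℂ) else 0) := by
      intro x
      rw [hfdef]
      push_cast [apply_ite]
      rfl
    have hft : ftrans f γ = ((∑ b ∈ B, (γ b : ℂ)) * starRingEnd ℂ (∑ b ∈ B, (γ b : ℂ))) := by
      rw [ftrans]
      calc ∑ x : G, (γ x : ℂ) * ((f x : ℝ) : ℂ)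
          = ∑ x : G, ∑ b ∈ B, ∑ b' ∈ B, (γ x : ℂ) * (if b - b' = x then (1:ℂ) else 0) := by
            refine Finset.sum_congr rfl fun x _ => ?_
            rw [hfx x]
            simp only [Finset.mul_sum]
        _ = ∑ b ∈ B, ∑ b' ∈ B, ∑ x : G, (γ x : ℂ) * (if b - b' = x then (1:ℂ) else 0) := by
            rw [Finset.sum_comm]
            exact Finset.sum_congr rfl fun b _ => Finset.sum_comm
        _ = ∑ b ∈ B, ∑ b' ∈ B, (γ (b - b') : ℂ) := by
            refine Finset.sum_congr rfl fun b _ => Finset.sum_congr rfl fun b' _ => ?_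
            simp only [mul_ite, mul_one, mul_zero]
            rw [Finset.sum_ite_eq Finset.univ (b - b') (fun x => (γ x : ℂ))]
            simp
        _ = (∑ b ∈ B, (γ b : ℂ)) * starRingEnd ℂ (∑ b ∈ B, (γ b : ℂ)) := by
            rw [map_sum, Finset.sum_mul]
            refine Finset.sum_congr rfl fun b _ => ?_
            rw [Finset.mul_sum]
            refine Finset.sum_congr rfl fun b' _ => ?_
            rw [show b - b' = b + -b' from by abel, coe_add, coe_neg]
    rw [hft, Complex.mul_conj]
    rw [Complex.zero_le_real]
    exact Complex.normSq_nonneg _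
  · rw [hsum]; positivity
  · rw [hf0, hsum]
    field_simp

lemma lamSet_mono {S T : Set (G → ℝ)} (h : S ⊆ T) : lamSet S ⊆ lamSet T := by
  rintro r ⟨f, hf, h1, h2, h3⟩
  exact ⟨f, h hf, h1, h2, h3⟩

end StdAux

theorem stmt0 {G : Type*} [AddCommGroup G] [Fintype G] (A : Set G) (hA : IsStandard A) :
    1 / (Fintype.card G : ℝ) ≤ deltaL A ∧
    deltaL A ≤ lamMinus A ∧
    lamMinus A ≤ lam A ∧
    lam A ≤ lamPlus A ∧
    lamPlus A ≤ deltaU A ∧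
    deltaU A ≤ 1 ∧
    lamMinus A ≤ lamPM A ∧
    lamPM A ≤ lamPlus A := by
  classical
  obtain ⟨hAneg, hA0⟩ := hA
  have hq0 : (0:ℝ) < (Fintype.card G : ℝ) := by exact_mod_cast Fintype.card_pos
  -- Delta facts
  have h1D : 1 ∈ {n | ∃ B : Finset G, ((B : Set G) - (B : Set G)) ∩ A = {0} ∧ B.card = n} := by
    refine ⟨{0}, ?_, Finset.card_singleton 0⟩
    simp only [Finset.coe_singleton, Set.singleton_sub_singleton, sub_zero]
    exact Set.inter_eq_left.mpr (Set.singleton_subset_iff.mpr hA0)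
  have bddD : BddAbove {n | ∃ B : Finset G, ((B : Set G) - (B : Set G)) ∩ A = {0} ∧ B.card = n} := by
    refine ⟨Fintype.card G, ?_⟩
    rintro n ⟨B, _, hB⟩
    rw [← hB, ← Finset.card_univ]
    exact Finset.card_le_univ B
  have hDmem := Nat.sSup_mem ⟨1, h1D⟩ bddD
  have hD1 : 1 ≤ Delta A := le_csSup bddD h1D
  -- DeltaBar facts
  have h1DB : 1 ∈ {n | ∃ B : Finset G, ((B : Set G) - (B : Set G)) ⊆ A ∧ B.card = n} := by
    refine ⟨{0}, ?_, Finset.card_singleton 0⟩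
    simp only [Finset.coe_singleton, Set.singleton_sub_singleton, sub_zero]
    exact Set.singleton_subset_iff.mpr hA0
  have bddDB : BddAbove {n | ∃ B : Finset G, ((B : Set G) - (B : Set G)) ⊆ A ∧ B.card = n} := by
    refine ⟨Fintype.card G, ?_⟩
    rintro n ⟨B, _, hB⟩
    rw [← hB, ← Finset.card_univ]
    exact Finset.card_le_univ B
  have hDBmem := Nat.sSup_mem ⟨1, h1DB⟩ bddDB
  have hDB1 : 1 ≤ DeltaBar A := le_csSup bddDB h1DB
  have hDB0 : (0:ℝ) < (DeltaBar A : ℝ) := by exact_mod_cast hDB1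
  -- lower bound for the minus set
  have hlow : ∀ r ∈ lamSet {f : G → ℝ | f ≠ 0 ∧ ∀ x ∉ A, f x ≤ 0}, deltaL A ≤ r := by
    rintro r ⟨f, ⟨hfne, hfle⟩, hpos, hs, rfl⟩
    obtain ⟨B, hB, hBcard⟩ := hDmem
    have hkey := StdAux.key f hfle hpos hs B hB
    have hD : B.card = Delta A := hBcard
    rw [deltaL, ← hD]
    exact hkey
  have bddminus : BddBelow (lamSet {f : G → ℝ | f ≠ 0 ∧ ∀ x ∉ A, f x ≤ 0}) :=
    ⟨deltaL A, hlow⟩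
  -- subset inclusions
  have iPS : ({f : G → ℝ | f ≠ 0 ∧ (∀ x ∉ A, f x = 0) ∧ ∀ x ∈ A, 0 ≤ f x} : Set (G → ℝ))
      ⊆ {f | f ≠ 0 ∧ ∀ x ∉ A, f x = 0} := fun f ⟨a, b, _⟩ => ⟨a, b⟩
  have iSM : ({f : G → ℝ | f ≠ 0 ∧ ∀ x ∉ A, f x = 0} : Set (G → ℝ))
      ⊆ {f | f ≠ 0 ∧ ∀ x ∉ A, f x ≤ 0} := fun f ⟨a, b⟩ => ⟨a, fun x hx => (b x hx).le⟩
  have iPPM : ({f : G → ℝ | f ≠ 0 ∧ (∀ x ∉ A, f x = 0) ∧ ∀ x ∈ A, 0 ≤ f x} : Set (G → ℝ))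
      ⊆ {f | f ≠ 0 ∧ (∀ x ∉ A, f x ≤ 0) ∧ ∀ x ∈ A, 0 ≤ f x} :=
    fun f ⟨a, b, c⟩ => ⟨a, fun x hx => (b x hx).le, c⟩
  have iPMM : ({f : G → ℝ | f ≠ 0 ∧ (∀ x ∉ A, f x ≤ 0) ∧ ∀ x ∈ A, 0 ≤ f x} : Set (G → ℝ))
      ⊆ {f | f ≠ 0 ∧ ∀ x ∉ A, f x ≤ 0} := fun f ⟨a, b, _⟩ => ⟨a, b⟩
  have one_memP := StdAux.delta0_mem (G := G) (A := A) hA0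
  have neP : (lamSet {f : G → ℝ | f ≠ 0 ∧ (∀ x ∉ A, f x = 0) ∧ ∀ x ∈ A, 0 ≤ f x}).Nonempty :=
    ⟨1, one_memP⟩
  have neS : (lamSet {f : G → ℝ | f ≠ 0 ∧ ∀ x ∉ A, f x = 0}).Nonempty :=
    ⟨1, StdAux.lamSet_mono iPS one_memP⟩
  have nePM : (lamSet {f : G → ℝ | f ≠ 0 ∧ (∀ x ∉ A, f x ≤ 0) ∧ ∀ x ∈ A, 0 ≤ f x}).Nonempty :=
    ⟨1, StdAux.lamSet_mono iPPM one_memP⟩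
  have neM : (lamSet {f : G → ℝ | f ≠ 0 ∧ ∀ x ∉ A, f x ≤ 0}).Nonempty :=
    ⟨1, StdAux.lamSet_mono iSM (StdAux.lamSet_mono iPS one_memP)⟩
  have bddS : BddBelow (lamSet {f : G → ℝ | f ≠ 0 ∧ ∀ x ∉ A, f x = 0}) :=
    bddminus.mono (StdAux.lamSet_mono iSM)
  have bddP : BddBelow (lamSet {f : G → ℝ | f ≠ 0 ∧ (∀ x ∉ A, f x = 0) ∧ ∀ x ∈ A, 0 ≤ f x}) :=
    bddS.mono (StdAux.lamSet_mono iPS)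
  have bddPM : BddBelow (lamSet {f : G → ℝ | f ≠ 0 ∧ (∀ x ∉ A, f x ≤ 0) ∧ ∀ x ∈ A, 0 ≤ f x}) :=
    bddminus.mono (StdAux.lamSet_mono iPMM)
  refine ⟨?_, ?_, ?_, ?_, ?_, ?_, ?_, ?_⟩
  · -- 1/q ≤ deltaL
    have h1 : (1:ℝ) ≤ (Delta A : ℝ) := by exact_mod_cast hD1
    rw [deltaL, div_le_div_iff₀ hq0 hq0]
    nlinarith
  · exact le_csInf neM hlow
  · exact csInf_le_csInf bddminus neS (StdAux.lamSet_mono iSM)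
  · exact csInf_le_csInf bddS neP (StdAux.lamSet_mono iPS)
  · -- lamPlus ≤ deltaU
    obtain ⟨B, hB, hBcard⟩ := hDBmem
    have hBD : B.card = DeltaBar A := hBcard
    have hcB : 0 < B.card := by rw [hBD]; omega
    have hmem := StdAux.auto_mem B hB hcB
    rw [hBD] at hmem
    exact csInf_le bddP hmem
  · rw [deltaU, div_le_one hDB0]
    exact_mod_cast hDB1
  · exact csInf_le_csInf bddminus nePM (StdAux.lamSet_mono iPMM)
  · exact csInf_le_csInf bddPM neP (StdAux.lamSet_mono iPPM)
end
end

section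
/- Let G be a finite commutative group with |G| = q, let A ⊆ G be a standard set, let B ⊆ G satisfy (B−B) ∩ A = {0}, and let f : G → ℝ be a function with f(x) ≤ 0 for every x ∈ G∖A and with f̂ ≥ 0. Then |B| · f̂(𝟙) ≤ q · f(0). (Consequently δ(A) ≤ λ⁻(A).) -/
open scoped Pointwise ComplexOrder

noncomputable section

/-!
Delsarte's linear programming bound. For every character `ψ` the product
`f̂(ψ) |Σ_{b ∈ B} ψ(b)|²` is nonnegative, and summing it over all characters gives, by
orthogonality, `q Σ_{b, b' ∈ B} f(b' - b)`. Keeping only the trivial character bounds this sum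
from below by `|B|² f̂(𝟙)`; since `b' - b ∉ A` for `b ≠ b'`, the off-diagonal terms are `≤ 0`,
so the sum is at most `q |B| f(0)`.
-/

open Finset

section Fourier

variable {G : Type*} [AddCommGroup G] [Fintype G]

namespace AddChar

theorem sum_sum_apply_mul (f : G → ℂ) :
    ∑ ψ : AddChar G ℂ, ∑ x, ψ x * f x = Fintype.card G * f 0 := by
  classical
  rw [sum_comm]
  simp_rw [← sum_mul, sum_apply_eq_ite]
  simp

theorem sum_apply_add_mul (ψ : AddChar G ℂ) (f : G → ℂ) (c : G) :
    ∑ x, ψ (x + c) * f x = ∑ x, ψ x * f (x - c) :=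
  Fintype.sum_equiv (Equiv.addRight c) _ _ fun x => by
    rw [Equiv.coe_addRight, add_sub_cancel_right]

theorem sum_sum_apply_mul_mul_conj (f : G → ℂ) (B : Finset G) :
    ∑ ψ : AddChar G ℂ,
        (∑ x, ψ x * f x) * ((∑ b ∈ B, ψ b) * starRingEnd ℂ (∑ b ∈ B, ψ b)) =
      Fintype.card G * ∑ b ∈ B, ∑ b' ∈ B, f (b' - b) := by
  have expand : ∀ ψ : AddChar G ℂ,
      (∑ x, ψ x * f x) * ((∑ b ∈ B, ψ b) * starRingEnd ℂ (∑ b ∈ B, ψ b)) =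
        ∑ b ∈ B, ∑ b' ∈ B, ∑ x, ψ x * f (x - (b - b')) := by
    intro ψ
    simp_rw [map_sum, ← map_neg_eq_conj]
    rw [sum_mul_sum, mul_sum]
    refine sum_congr rfl fun b _ => ?_
    rw [mul_sum]
    refine sum_congr rfl fun b' _ => ?_
    rw [← sum_apply_add_mul, sum_mul]
    refine sum_congr rfl fun x _ => ?_
    rw [sub_eq_add_neg, map_add_eq_mul, map_add_eq_mul]
    ring
  simp_rw [expand]
  rw [sum_comm, mul_sum]
  refine sum_congr rfl fun b _ => ?_
  rw [sum_comm, mul_sum]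
  refine sum_congr rfl fun b' _ => ?_
  rw [sum_sum_apply_mul]
  simp

end AddChar

theorem PosFT.zero_le_sum_addChar_mul {f : G → ℝ} (hf : PosFT f) (ψ : AddChar G ℂ) :
    0 ≤ ∑ x, ψ x * (f x : ℂ) :=
  hf (AddChar.circleEquivComplex.symm ψ)

theorem PosFT.zero_le_apply_zero {f : G → ℝ} (hf : PosFT f) : 0 ≤ f 0 := by
  have h : (0 : ℂ) ≤ Fintype.card G * (f 0 : ℂ) := by
    rw [← AddChar.sum_sum_apply_mul fun x => (f x : ℂ)]
    exact sum_nonneg fun ψ _ => hf.zero_le_sum_addChar_mul ψ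
  exact nonneg_of_mul_nonneg_right (by exact_mod_cast h) (by positivity)

theorem PosFT.card_sq_mul_sum_le {f : G → ℝ} (hf : PosFT f) (B : Finset G) :
    (#B : ℝ) ^ 2 * ∑ x, f x ≤ Fintype.card G * ∑ b ∈ B, ∑ b' ∈ B, f (b' - b) := by
  set term : AddChar G ℂ → ℂ := fun ψ =>
    (∑ x, ψ x * (f x : ℂ)) * ((∑ b ∈ B, ψ b) * starRingEnd ℂ (∑ b ∈ B, ψ b))
  have term_nonneg : ∀ ψ, 0 ≤ term ψ := fun ψ =>
    mul_nonneg (hf.zero_le_sum_addChar_mul ψ)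
      (by rw [Complex.mul_conj]; exact_mod_cast Complex.normSq_nonneg _)
  have term_one : term 1 = ((#B : ℝ) ^ 2 * ∑ x, f x : ℝ) := by
    simp only [term, AddChar.one_apply, one_mul, sum_const, nsmul_eq_mul, mul_one, map_natCast]
    push_cast
    ring
  have h : term 1 ≤ ∑ ψ, term ψ := single_le_sum (fun ψ _ => term_nonneg ψ) (mem_univ 1)
  rw [term_one, AddChar.sum_sum_apply_mul_mul_conj] at h
  exact_mod_cast h

end Fourier

theorem Finset.sum_sum_apply_sub_le_card_mul {G : Type*} [AddCommGroup G] {f : G → ℝ}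
    {B : Finset G} (hB : ∀ b ∈ B, ∀ b' ∈ B, b ≠ b' → f (b' - b) ≤ 0) :
    ∑ b ∈ B, ∑ b' ∈ B, f (b' - b) ≤ #B * f 0 := by
  classical
  have row : ∀ b ∈ B, ∑ b' ∈ B, f (b' - b) ≤ f 0 := by
    intro b hb
    rw [← add_sum_erase _ _ hb, sub_self]
    have off_diag : ∑ b' ∈ B.erase b, f (b' - b) ≤ 0 := sum_nonpos fun b' hb' =>
      hB b hb b' (mem_of_mem_erase hb') (ne_of_mem_erase hb').symm
    linarith
  simpa using sum_le_sum row

theorem stmt1_general {G : Type*} [AddCommGroup G] [Fintype G] (A : Set G)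
    (B : Finset G) (hB : ((B : Set G) - (B : Set G)) ∩ A = {0})
    (f : G → ℝ) (hf : ∀ x ∉ A, f x ≤ 0) (hft : PosFT f) :
    (B.card : ℝ) * (∑ x, f x) ≤ (Fintype.card G : ℝ) * f 0 := by
  have off_diag : ∀ b ∈ B, ∀ b' ∈ B, b ≠ b' → f (b' - b) ≤ 0 := by
    refine fun b hb b' hb' hne => hf _ fun hA => hne ?_
    have h : b' - b ∈ ((B : Set G) - (B : Set G)) ∩ A := ⟨Set.sub_mem_sub hb' hb, hA⟩
    rw [hB] at h
    exact (sub_eq_zero.mp h).symm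
  rcases (#B).eq_zero_or_pos with hB0 | hBpos
  · simpa [hB0] using mul_nonneg (Nat.cast_nonneg _) hft.zero_le_apply_zero
  · have h := (hft.card_sq_mul_sum_le B).trans (mul_le_mul_of_nonneg_left
      (sum_sum_apply_sub_le_card_mul off_diag) (Nat.cast_nonneg _))
    exact le_of_mul_le_mul_left (by linarith) (Nat.cast_pos.mpr hBpos : (0 : ℝ) < #B)

theorem stmt1 {G : Type*} [AddCommGroup G] [Fintype G] (A : Set G) (hA : IsStandard A)
    (B : Finset G) (hB : ((B : Set G) - (B : Set G)) ∩ A = {0})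
    (f : G → ℝ) (hf : ∀ x ∉ A, f x ≤ 0) (hft : PosFT f) :
    (B.card : ℝ) * (∑ x, f x) ≤ (Fintype.card G : ℝ) * f 0 :=
  stmt1_general A B hB f hf hft
end
end

section
/- Let G be a finite commutative group, H a subgroup of G, and A ⊆ H a standard set. Then Δ(A, G) = [G : H] · Δ(A, H), where for a group K ⊇ A, Δ(A, K) = max{|B| : B ⊆ K, (B−B) ∩ A = {0}}. Equivalently, Δ(A, G)/|G| = Δ(A, H)/|H|, so the measure of intersectivity δ(A) does not depend on the ambient group. -/
open scoped Pointwise ComplexOrder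

noncomputable section

/-!
Write every `x : G` uniquely as `h + out q` with `h : H` and `q : G ⧸ H`. A difference of two
such points can lie in `A ⊆ H` only if both lie over the same coset, where it is the difference of
their `H`-coordinates. Hence a set avoiding `A` in `G` meets each coset in (a translate of) a set
avoiding `A` in `H`, and conversely the product of an optimal set in `H` with the coset
representatives avoids `A` in `G`.
-/

open Finset QuotientAddGroup Function

section Delta

variable {G : Type*} [AddCommGroup G] {A : Set G} {B : Finset G}

theorem sub_inter_eq_zero_iff :
    ((B : Set G) - B) ∩ A = {0} ↔
      B.Nonempty ∧ 0 ∈ A ∧ (B : Set G).Pairwise (fun x y => x - y ∉ A) := by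
  constructor
  · intro h
    obtain ⟨⟨x, hx, -⟩, h0⟩ : (0 : G) ∈ ((B : Set G) - B) ∩ A := h ▸ rfl
    refine ⟨⟨x, hx⟩, h0, fun y hy z hz hne hyz => hne ?_⟩
    have : y - z ∈ ((B : Set G) - B) ∩ A := ⟨Set.sub_mem_sub hy hz, hyz⟩
    rw [h] at this
    exact sub_eq_zero.mp this
  · rintro ⟨⟨x, hx⟩, h0, hB⟩
    refine Set.eq_singleton_iff_unique_mem.mpr ⟨⟨⟨x, hx, x, hx, sub_self x⟩, h0⟩, ?_⟩
    rintro _ ⟨⟨y, hy, z, hz, rfl⟩, hyz⟩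
    by_contra hne
    exact hB hy hz (fun h => hne (sub_eq_zero.mpr h)) hyz

variable [Finite G]

theorem bddAbove_card_sub_inter_eq_zero (A : Set G) :
    BddAbove {n | ∃ B : Finset G, ((B : Set G) - B) ∩ A = {0} ∧ B.card = n} := by
  have := Fintype.ofFinite G
  exact ⟨Fintype.card G, by rintro _ ⟨B, -, rfl⟩; exact B.card_le_univ⟩

theorem card_le_Delta (h0 : 0 ∈ A) (hB : (B : Set G).Pairwise (fun x y => x - y ∉ A)) :
    B.card ≤ Delta A := by
  rcases B.eq_empty_or_nonempty with rfl | hne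
  · simp
  exact le_csSup (bddAbove_card_sub_inter_eq_zero A)
    ⟨B, sub_inter_eq_zero_iff.mpr ⟨hne, h0, hB⟩, rfl⟩

theorem exists_pairwise_card_eq_Delta (h0 : 0 ∈ A) :
    ∃ B : Finset G, (B : Set G).Pairwise (fun x y => x - y ∉ A) ∧ B.card = Delta A := by
  obtain ⟨B, hB, hcard⟩ : Delta A ∈ _ :=
    Nat.sSup_mem ⟨1, {0}, sub_inter_eq_zero_iff.mpr ⟨by simp, h0, by simp⟩, rfl⟩
      (bddAbove_card_sub_inter_eq_zero A)
  exact ⟨B, (sub_inter_eq_zero_iff.mp hB).2.2, hcard⟩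

end Delta

section Coset

variable {G : Type*} [AddCommGroup G] {H : AddSubgroup G} {A : Set H}

theorem mk_coe_add_out (h : H) (q : G ⧸ H) : ((h + q.out : G) : G ⧸ H) = q := by
  rw [mk_add, (eq_zero_iff _).mpr h.2, zero_add, out_eq']

theorem coe_add_out_injective : Injective fun p : H × (G ⧸ H) => (p.1 : G) + p.2.out := by
  rintro ⟨h₁, q₁⟩ ⟨h₂, q₂⟩ heq
  obtain rfl : q₁ = q₂ := by
    rw [← mk_coe_add_out h₁ q₁, ← mk_coe_add_out h₂ q₂]
    exact congrArg _ heq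
  simpa using heq

theorem coe_sub_coe_mem_image_val_iff {h₁ h₂ : H} :
    (h₁ - h₂ : G) ∈ Subtype.val '' A ↔ h₁ - h₂ ∈ A := by
  rw [← AddSubgroup.coe_sub, Subtype.val_injective.mem_set_image]

theorem eq_of_coe_add_out_sub_mem {h₁ h₂ : H} {q₁ q₂ : G ⧸ H}
    (hmem : (h₁ + q₁.out : G) - (h₂ + q₂.out) ∈ H) : q₁ = q₂ := by
  rw [← mk_coe_add_out h₁ q₁, ← mk_coe_add_out h₂ q₂]
  exact eq_iff_sub_mem.mpr hmem

variable [Finite G]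

theorem card_le_Delta_of_forall_mk_eq (h0 : 0 ∈ A) {C : Finset G}
    (hC : (C : Set G).Pairwise (fun x y => x - y ∉ Subtype.val '' A)) {q : G ⧸ H}
    (hq : ∀ x ∈ C, (x : G ⧸ H) = q) : C.card ≤ Delta A := by
  classical
  have hinj : Injective fun h : H => (h : G) + q.out :=
    (add_left_injective _).comp Subtype.val_injective
  set C' := C.preimage (fun h : H => (h : G) + q.out) hinj.injOn
  calc C.card ≤ (C'.image fun h : H => (h : G) + q.out).card := by
        refine card_le_card fun x hx => mem_image.mpr ?_
        have hxH : x - q.out ∈ H := eq_iff_sub_mem.mp ((hq x hx).trans (out_eq' q).symm)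
        exact ⟨⟨x - q.out, hxH⟩, mem_preimage.mpr (by simpa using hx), by simp⟩
    _ ≤ C'.card := card_image_le
    _ ≤ Delta A := card_le_Delta h0 fun h₁ h₁C h₂ h₂C hne hA => by
        refine hC (mem_preimage.mp h₁C) (mem_preimage.mp h₂C) (hinj.ne hne) ?_
        rw [add_sub_add_right_eq_sub]
        exact coe_sub_coe_mem_image_val_iff.mpr hA

theorem Delta_image_val_le (h0 : 0 ∈ A) :
    Delta (Subtype.val '' A : Set G) ≤ H.index * Delta A := by
  classical
  have := Fintype.ofFinite (G ⧸ H)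
  obtain ⟨B, hB, hcard⟩ :=
    exists_pairwise_card_eq_Delta (A := Subtype.val '' A) ⟨0, h0, rfl⟩
  rw [← hcard, AddSubgroup.index, Nat.card_eq_fintype_card, ← card_univ, mul_comm]
  exact card_le_mul_card_image_of_maps_to (f := ((↑) : G → G ⧸ H)) (fun _ _ => mem_univ _) _
    fun q _ => card_le_Delta_of_forall_mk_eq h0 (hB.mono (coe_subset.mpr (filter_subset _ _)))
      fun x hx => (mem_filter.mp hx).2

theorem index_mul_Delta_le (h0 : 0 ∈ A) :
    H.index * Delta A ≤ Delta (Subtype.val '' A : Set G) := by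
  classical
  have := Fintype.ofFinite (G ⧸ H)
  obtain ⟨B, hB, hcard⟩ := exists_pairwise_card_eq_Delta h0
  calc H.index * Delta A
      = ((B ×ˢ univ).image fun p : H × (G ⧸ H) => (p.1 : G) + p.2.out).card := by
        rw [card_image_of_injective _ coe_add_out_injective, card_product, card_univ, hcard,
          AddSubgroup.index, Nat.card_eq_fintype_card, mul_comm]
    _ ≤ Delta (Subtype.val '' A : Set G) := by
        refine card_le_Delta ⟨0, h0, rfl⟩ ?_
        simp only [coe_image, coe_product, coe_univ]
        rintro _ ⟨⟨h₁, q₁⟩, ⟨h₁B, -⟩, rfl⟩ _ ⟨⟨h₂, q₂⟩, ⟨h₂B, -⟩, rfl⟩ hne ⟨a, haA, ha⟩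
        obtain rfl := eq_of_coe_add_out_sub_mem (ha ▸ a.2)
        refine hB h₁B h₂B (fun h => hne (by dsimp only at h ⊢; rw [h]))
          (coe_sub_coe_mem_image_val_iff.mp ?_)
        rw [← add_sub_add_right_eq_sub, ← ha]
        exact ⟨a, haA, rfl⟩

end Coset

theorem Delta_image_val {G : Type*} [AddCommGroup G] [Finite G] {H : AddSubgroup G}
    {A : Set H} (h0 : 0 ∈ A) : Delta (Subtype.val '' A : Set G) = H.index * Delta A :=
  (Delta_image_val_le h0).antisymm (index_mul_Delta_le h0)

theorem deltaL_image_val {G : Type*} [AddCommGroup G] [Fintype G] {H : AddSubgroup G}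
    [Fintype H] {A : Set H} (h0 : 0 ∈ A) : deltaL (Subtype.val '' A : Set G) = deltaL A := by
  have hindex : (H.index : ℝ) ≠ 0 := Nat.cast_ne_zero.mpr H.index_ne_zero_of_finite
  rw [deltaL, deltaL, Delta_image_val h0, ← Nat.card_eq_fintype_card,
    ← Nat.card_eq_fintype_card, ← H.card_mul_index]
  push_cast
  rw [mul_comm (Nat.card H : ℝ), mul_div_mul_left _ _ hindex]

theorem stmt5 {G : Type*} [AddCommGroup G] [Fintype G]
    (H : AddSubgroup G) [Fintype H]
    (A : Set H) (hA : IsStandard A) :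
    Delta ((Subtype.val '' A : Set G)) = H.index * Delta A ∧
    (Delta ((Subtype.val '' A : Set G)) : ℝ) / (Fintype.card G : ℝ) =
      (Delta A : ℝ) / (Fintype.card H : ℝ) :=
  ⟨Delta_image_val hA.2, deltaL_image_val hA.2⟩
end
end

section
/- Let q be a prime with q ≡ 1 (mod 4), G = ℤ_q, and let A = {0} ∪ {x ∈ ℤ_q : x is a nonzero quadratic residue mod q}. Then A is a standard set and λ(A) = λ±(A) = 1/√q. -/
open scoped Pointwise ComplexOrder

noncomputable section

/-!
Let `χ` be the Legendre symbol mod `q`. As `q ≡ 1 (mod 4)`, `-1` is a square, so `A`, the set of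
squares, is symmetric, and every nontrivial Gauss sum `Σ γ(x) χ(x)` equals `±√q`. Hence
`w_ε = √q 𝟙_{0} + 1 + εχ` (`quadWitness q ε`) has nonnegative Fourier transform for `ε = ±1`.
The function `w_1` vanishes off `A`, and `w_1(0) / Σ w_1 = (√q + 1) / (√q + q) = 1 / √q`.
Conversely, if `f ≤ 0` off `A` and `f̂ ≥ 0`, Plancherel and the positivity of both transforms give
`(Σ f)(Σ w_{-1}) ≤ q Σ f w_{-1}`; since `w_{-1}` vanishes on the nonzero squares and is `2` on the
non-squares, the right side is at most `q (√q + 1) f(0)`, whence `Σ f ≤ √q f(0)`.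
-/

open Finset

section Fourier

variable {G : Type*} [AddCommGroup G] [Fintype G]

lemma ftrans_add (f g : G → ℝ) (γ : AddChar G Circle) :
    ftrans (f + g) γ = ftrans f γ + ftrans g γ := by
  simp only [ftrans, Pi.add_apply, Complex.ofReal_add, mul_add, sum_add_distrib]

lemma ftrans_smul (c : ℝ) (f : G → ℝ) (γ : AddChar G Circle) :
    ftrans (c • f) γ = c * ftrans f γ := by
  simp only [ftrans, Pi.smul_apply, smul_eq_mul, Complex.ofReal_mul, mul_sum]
  exact sum_congr rfl fun _ _ => by ring

lemma ftrans_apply_one (f : G → ℝ) : ftrans f 1 = ((∑ x, f x : ℝ) : ℂ) := by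
  simp [ftrans]

lemma ftrans_pi_single_zero [DecidableEq G] (γ : AddChar G Circle) :
    ftrans (Pi.single 0 1) γ = 1 := by
  simp [ftrans, Pi.single_apply, apply_ite (fun r : ℝ => (r : ℂ))]

omit [Fintype G] in
lemma coeHom_compAddChar_ne_one {γ : AddChar G Circle} (hγ : γ ≠ 1) :
    Circle.coeHom.compAddChar γ ≠ 1 := fun h =>
  hγ <| MonoidHom.compAddChar_injective_right _ Circle.coe_injective <| h.trans <| by ext; simp

lemma ftrans_one_of_ne_one {γ : AddChar G Circle} (hγ : γ ≠ 1) : ftrans 1 γ = 0 := by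
  have h : ∑ x, (γ x : ℂ) = 0 := AddChar.sum_eq_zero_of_ne_one (coeHom_compAddChar_ne_one hγ)
  simpa [ftrans] using h

end Fourier

section GaussSum

variable {F : Type*} [Field F] [Fintype F]

lemma ringChar_ne_two_of_card_mod_four_eq_one (hF : Fintype.card F % 4 = 1) :
    ringChar F ≠ 2 := by
  rw [Ne, FiniteField.even_card_iff_char_two]; omega

variable [DecidableEq F]

lemma ftrans_quadraticChar_eq_gaussSum (γ : AddChar F Circle) :
    ftrans (fun x => (quadraticChar F x : ℝ)) γ =
      gaussSum ((quadraticChar F).ringHomComp (Int.castRingHom ℂ))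
        (Circle.coeHom.compAddChar γ) :=
  sum_congr rfl fun _ _ => (mul_comm _ _).trans (by push_cast; rfl)

lemma ftrans_quadraticChar_sq (hF : ringChar F ≠ 2) {γ : AddChar F Circle} (hγ : γ ≠ 1) :
    ftrans (fun x => (quadraticChar F x : ℝ)) γ ^ 2 =
      quadraticChar F (-1) * Fintype.card F := by
  have hχ : (quadraticChar F).ringHomComp (Int.castRingHom ℂ) ≠ 1 := fun h =>
    quadraticChar_ne_one hF ((MulChar.ringHomComp_eq_one_iff (RingHom.injective_int _)).mp h)
  rw [ftrans_quadraticChar_eq_gaussSum, gaussSum_sq hχ ((quadraticChar_isQuadratic F).comp _)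
    (AddChar.IsPrimitive.of_ne_one (coeHom_compAddChar_ne_one hγ))]
  simp

lemma quadraticChar_neg_one_of_card_mod_four_eq_one (hF : Fintype.card F % 4 = 1) :
    quadraticChar F (-1) = 1 :=
  (quadraticChar_one_iff_isSquare (neg_ne_zero.mpr one_ne_zero)).mpr
    (FiniteField.isSquare_neg_one_iff.mpr (by omega))

lemma ftrans_quadraticChar_eq_sqrt_or_eq_neg_sqrt (hF : Fintype.card F % 4 = 1)
    {γ : AddChar F Circle} (hγ : γ ≠ 1) :
    ftrans (fun x => (quadraticChar F x : ℝ)) γ = Real.sqrt (Fintype.card F) ∨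
      ftrans (fun x => (quadraticChar F x : ℝ)) γ = -Real.sqrt (Fintype.card F) := by
  have hsq := ftrans_quadraticChar_sq (ringChar_ne_two_of_card_mod_four_eq_one hF) hγ
  rw [quadraticChar_neg_one_of_card_mod_four_eq_one hF, Int.cast_one, one_mul] at hsq
  have hsqrt : ((Real.sqrt (Fintype.card F) : ℝ) : ℂ) ^ 2 = Fintype.card F := by
    rw [← Complex.ofReal_pow, Real.sq_sqrt (Nat.cast_nonneg _), Complex.ofReal_natCast]
  exact sq_eq_sq_iff_eq_or_eq_neg.mp (hsq.trans hsqrt.symm)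

end GaussSum

section Squares

lemma zero_union_ne_zero_sq_eq_setOf_isSquare {R : Type*} [MonoidWithZero R] :
    ({0} ∪ {x : R | x ≠ 0 ∧ ∃ y : R, x = y ^ 2}) = {x | IsSquare x} := by
  ext x
  by_cases hx : x = 0
  · simp [hx]
  · simp [hx, IsSquare, sq]

lemma isSquare_neg_iff_of_isSquare_neg_one {R : Type*} [CommRing R] (h : IsSquare (-1 : R))
    {x : R} : IsSquare (-x) ↔ IsSquare x := by
  have key (y : R) (hy : IsSquare y) : IsSquare (-y) := by
    simpa using h.mul hy
  exact ⟨fun hx => by simpa using key _ hx, key x⟩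

end Squares

section ZModFourier

variable {N : ℕ} [NeZero N]

lemma ftrans_toCircle_mulShift (f : ZMod N → ℝ) (t : ZMod N) :
    ftrans f (ZMod.toCircle.mulShift t) = ∑ x, ZMod.stdAddChar (t * x) * (f x : ℂ) := rfl

lemma sum_ftrans_mulShift_mul_ftrans_mulShift_neg (f g : ZMod N → ℝ) :
    ∑ t, ftrans f (ZMod.toCircle.mulShift t) * ftrans g (ZMod.toCircle.mulShift (-t)) =
      N * ((∑ x, f x * g x : ℝ) : ℂ) := by
  have horth (x y : ZMod N) : ∑ t : ZMod N, ZMod.stdAddChar (t * (x - y)) =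
      if x = y then (N : ℂ) else 0 := by
    simpa [sub_eq_zero, ZMod.card] using
      AddChar.sum_mulShift (x - y) (ZMod.isPrimitive_stdAddChar N)
  calc ∑ t, ftrans f (ZMod.toCircle.mulShift t) * ftrans g (ZMod.toCircle.mulShift (-t))
      = ∑ t, ∑ x, ∑ y, (f x : ℂ) * g y * ZMod.stdAddChar (t * (x - y)) := by
        refine sum_congr rfl fun t _ => ?_
        rw [ftrans_toCircle_mulShift, ftrans_toCircle_mulShift, sum_mul_sum]
        refine sum_congr rfl fun x _ => sum_congr rfl fun y _ => ?_
        rw [show t * (x - y) = t * x + -t * y by ring, AddChar.map_add_eq_mul]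
        ring
    _ = ∑ x, ∑ y, (f x : ℂ) * g y * ∑ t : ZMod N, ZMod.stdAddChar (t * (x - y)) := by
        simp only [mul_sum]
        rw [sum_comm]
        exact sum_congr rfl fun x _ => sum_comm
    _ = N * ((∑ x, f x * g x : ℝ) : ℂ) := by
        simp [horth, mul_sum, mul_comm]

lemma PosFT.sum_mul_sum_le {f g : ZMod N → ℝ} (hf : PosFT f) (hg : PosFT g) :
    (∑ x, f x) * (∑ x, g x) ≤ N * ∑ x, f x * g x := by
  have hterm : ftrans f 1 * ftrans g 1 ≤
      ∑ t, ftrans f (ZMod.toCircle.mulShift t) * ftrans g (ZMod.toCircle.mulShift (-t)) := by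
    simpa using single_le_sum (f := fun t => ftrans f (ZMod.toCircle.mulShift t) *
      ftrans g (ZMod.toCircle.mulShift (-t))) (fun t _ => mul_nonneg (hf _) (hg _)) (mem_univ 0)
  rw [sum_ftrans_mulShift_mul_ftrans_mulShift_neg, ftrans_apply_one, ftrans_apply_one] at hterm
  exact_mod_cast hterm

end ZModFourier

section QuadraticResidues

variable {q : ℕ} [Fact q.Prime]

def quadWitness (q : ℕ) [Fact q.Prime] (ε : ℝ) : ZMod q → ℝ :=
  Real.sqrt q • Pi.single 0 1 + 1 + ε • fun x => (quadraticChar (ZMod q) x : ℝ)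

lemma quadWitness_apply (ε : ℝ) (x : ZMod q) :
    quadWitness q ε x =
      (if x = 0 then Real.sqrt q else 0) + 1 + ε * quadraticChar (ZMod q) x := by
  by_cases hx : x = 0 <;> simp [quadWitness, hx]

lemma ftrans_quadWitness (ε : ℝ) (γ : AddChar (ZMod q) Circle) :
    ftrans (quadWitness q ε) γ = Real.sqrt q + ftrans 1 γ +
      ε * ftrans (fun x => (quadraticChar (ZMod q) x : ℝ)) γ := by
  rw [quadWitness, ftrans_add, ftrans_add, ftrans_smul, ftrans_smul, ftrans_pi_single_zero, mul_one]

lemma sum_quadWitness (hq4 : q % 4 = 1) (ε : ℝ) :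
    ∑ x, quadWitness q ε x = Real.sqrt q + q := by
  have hχ : ∑ x : ZMod q, (quadraticChar (ZMod q) x : ℝ) = 0 := by
    exact_mod_cast quadraticChar_sum_zero
      (ringChar_ne_two_of_card_mod_four_eq_one (by rwa [ZMod.card]))
  have h := ftrans_quadWitness (q := q) ε 1
  simp only [ftrans_apply_one, hχ, Pi.one_apply, sum_const, card_univ, ZMod.card, nsmul_eq_mul,
    mul_one, Complex.ofReal_zero, mul_zero, add_zero] at h
  exact_mod_cast h

lemma posFT_quadWitness (hq4 : q % 4 = 1) {ε : ℝ} (hε : ε = 1 ∨ ε = -1) :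
    PosFT (quadWitness q ε) := by
  intro γ
  by_cases hγ : γ = 1
  · rw [hγ, ftrans_apply_one, sum_quadWitness hq4, Complex.zero_le_real]
    positivity
  · have hcard : Fintype.card (ZMod q) % 4 = 1 := by rwa [ZMod.card]
    rw [ftrans_quadWitness, ftrans_one_of_ne_one hγ]
    rcases ftrans_quadraticChar_eq_sqrt_or_eq_neg_sqrt hcard hγ with h | h <;>
      rcases hε with rfl | rfl <;> rw [h, ZMod.card] <;> norm_num <;> norm_cast <;> positivity

lemma quadWitness_zero (ε : ℝ) : quadWitness q ε 0 = Real.sqrt q + 1 := by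
  simp [quadWitness_apply]

lemma quadWitness_one_eq_zero {x : ZMod q} (hx : ¬IsSquare x) : quadWitness q 1 x = 0 := by
  have hx0 : x ≠ 0 := by rintro rfl; exact hx IsSquare.zero
  simp [quadWitness_apply, hx0, quadraticChar_neg_one_iff_not_isSquare.mpr hx]

lemma quadWitness_one_nonneg (x : ZMod q) : 0 ≤ quadWitness q 1 x := by
  by_cases hx0 : x = 0
  · rw [hx0, quadWitness_zero]; positivity
  · rcases quadraticChar_dichotomy hx0 with h | h <;> simp [quadWitness_apply, hx0, h]

lemma quadWitness_one_ne_zero : quadWitness q 1 ≠ 0 := fun h => by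
  have h0 := congr_fun h 0
  rw [quadWitness_zero, Pi.zero_apply] at h0
  linarith [Real.sqrt_nonneg q]

lemma sum_mul_quadWitness_neg_one_le {f : ZMod q → ℝ} (hf : ∀ x, ¬IsSquare x → f x ≤ 0) :
    ∑ x, f x * quadWitness q (-1) x ≤ (Real.sqrt q + 1) * f 0 := by
  have hle (x : ZMod q) :
      f x * quadWitness q (-1) x ≤ if x = 0 then (Real.sqrt q + 1) * f 0 else 0 := by
    by_cases hx0 : x = 0
    · simp [hx0, quadWitness_zero, mul_comm]
    · rcases quadraticChar_dichotomy hx0 with h | h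
      · simp [quadWitness_apply, hx0, h]
      · have := hf x (quadraticChar_neg_one_iff_not_isSquare.mp h)
        simp only [quadWitness_apply, hx0, h, if_false, Int.cast_neg, Int.cast_one]
        linarith
  calc ∑ x, f x * quadWitness q (-1) x
      ≤ ∑ x, if x = 0 then (Real.sqrt q + 1) * f 0 else 0 := sum_le_sum fun x _ => hle x
    _ = (Real.sqrt q + 1) * f 0 := by simp

lemma inv_sqrt_le_div_sum (hq4 : q % 4 = 1) {f : ZMod q → ℝ}
    (hf : ∀ x, ¬IsSquare x → f x ≤ 0) (hpos : PosFT f) (hS : ∑ x, f x ≠ 0) :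
    1 / Real.sqrt q ≤ f 0 / ∑ x, f x := by
  have hSpos : 0 < ∑ x, f x := by
    have h1 := hpos 1
    rw [ftrans_apply_one, Complex.zero_le_real] at h1
    exact h1.lt_of_ne' hS
  have hpair := hpos.sum_mul_sum_le (posFT_quadWitness hq4 (Or.inr rfl))
  rw [sum_quadWitness hq4] at hpair
  have hbound := mul_le_mul_of_nonneg_left (sum_mul_quadWitness_neg_one_le hf) (Nat.cast_nonneg q)
  set s := Real.sqrt q
  have hs : 0 < s := Real.sqrt_pos.mpr (Nat.cast_pos.mpr (Fact.out : q.Prime).pos)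
  have hss : s * s = q := Real.mul_self_sqrt (Nat.cast_nonneg q)
  have key : (∑ x, f x) * (s * (s + 1)) ≤ (f 0 * s) * (s * (s + 1)) := by
    linear_combination hpair + hbound + ((∑ x, f x) - (s + 1) * f 0) * hss
  rw [div_le_div_iff₀ hs hSpos, one_mul]
  exact le_of_mul_le_mul_right key (by positivity)

lemma isLeast_lamSet (hq4 : q % 4 = 1) {S : Set (ZMod q → ℝ)}
    (hS : ∀ f ∈ S, ∀ x, ¬IsSquare x → f x ≤ 0) (hw : quadWitness q 1 ∈ S) :
    IsLeast (lamSet S) (1 / Real.sqrt q) := by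
  have hs : 0 < Real.sqrt q := Real.sqrt_pos.mpr (Nat.cast_pos.mpr (Fact.out : q.Prime).pos)
  refine ⟨⟨quadWitness q 1, hw, posFT_quadWitness hq4 (Or.inl rfl), ?_, ?_⟩, ?_⟩
  · rw [sum_quadWitness hq4]; positivity
  · rw [sum_quadWitness hq4, quadWitness_zero, div_eq_div_iff hs.ne' (by positivity)]
    linear_combination (-1 : ℝ) * Real.mul_self_sqrt (Nat.cast_nonneg q)
  · rintro r ⟨f, hf, hpos, hsum, rfl⟩
    exact inv_sqrt_le_div_sum hq4 (hS f hf) hpos hsum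

end QuadraticResidues

theorem stmt9 (q : ℕ) [Fact (Nat.Prime q)] (hq4 : q % 4 = 1)
    (A : Set (ZMod q))
    (hA : A = {0} ∪ {x : ZMod q | x ≠ 0 ∧ ∃ y : ZMod q, x = y ^ 2}) :
    IsStandard A ∧
    lam A = 1 / Real.sqrt q ∧
    lamPM A = 1 / Real.sqrt q := by
  rw [zero_union_ne_zero_sq_eq_setOf_isSquare] at hA
  subst hA
  have hneg : IsSquare (-1 : ZMod q) := ZMod.exists_sq_eq_neg_one_iff.mpr (by omega)
  refine ⟨⟨?_, IsSquare.zero⟩, ?_, ?_⟩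
  · ext x
    exact (isSquare_neg_iff_of_isSquare_neg_one hneg).symm
  · refine (isLeast_lamSet hq4 ?_ ?_).csInf_eq
    · exact fun f hf x hx => (hf.2 x hx).le
    · exact ⟨quadWitness_one_ne_zero, fun x hx => quadWitness_one_eq_zero hx⟩
  · refine (isLeast_lamSet hq4 ?_ ?_).csInf_eq
    · exact fun f hf => hf.2.1
    · exact ⟨quadWitness_one_ne_zero, fun x hx => (quadWitness_one_eq_zero hx).le,
        fun x _ => quadWitness_one_nonneg x⟩
end
end

section
/- Let G be a finite commutative group with |G| = q, and let A₁, A₂ ⊆ G be standard sets. Then δ̄(A₁ ∩ A₂) ≤ q · δ̄(A₁) · δ̄(A₂); equivalently, Δ̄(A₁ ∩ A₂) ≥ Δ̄(A₁) · Δ̄(A₂) / q. -/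
open scoped Pointwise ComplexOrder

noncomputable section

/-! Averaging over translates: `∑ₓ |B₁ ∩ (x + B₂)| = |B₁| |B₂|`, so for optimal `B₁`, `B₂` some
translate `x + B₂` meets `B₁` in at least `|B₁| |B₂| / q` points, and the difference set of that
intersection lies in `(B₁ - B₁) ∩ (B₂ - B₂) ⊆ A₁ ∩ A₂`. -/

open Finset

lemma Finset.sum_card_inter_vadd {G : Type*} [AddGroup G] [Fintype G] [DecidableEq G]
    (A B : Finset G) : ∑ x : G, #(A ∩ (x +ᵥ B)) = #A * #B := by
  simp_rw [card_inter_vadd, addConvolution]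
  rw [← card_eq_sum_card_fiberwise (fun _ _ ↦ mem_univ _), card_product, card_neg]

lemma Finset.exists_card_mul_card_le_card_mul_card_inter_vadd {G : Type*} [AddGroup G]
    [Fintype G] [DecidableEq G] (A B : Finset G) :
    ∃ x : G, #A * #B ≤ Fintype.card G * #(A ∩ (x +ᵥ B)) := by
  obtain ⟨x, -, hx⟩ := exists_le_of_sum_le (s := univ) (f := fun _ ↦ #A * #B)
    (g := fun x ↦ Fintype.card G * #(A ∩ (x +ᵥ B))) univ_nonempty
    (by rw [sum_const, ← mul_sum, sum_card_inter_vadd, card_univ, smul_eq_mul])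
  exact ⟨x, hx⟩

lemma Set.inter_vadd_sub_inter_vadd_subset {G : Type*} [AddCommGroup G] (s t : Set G) (x : G) :
    (s ∩ (x +ᵥ t)) - (s ∩ (x +ᵥ t)) ⊆ (s - s) ∩ (t - t) := by
  refine Set.subset_inter (Set.sub_subset_sub Set.inter_subset_left Set.inter_subset_left) ?_
  calc (s ∩ (x +ᵥ t)) - (s ∩ (x +ᵥ t)) ⊆ (x +ᵥ t) - (x +ᵥ t) :=
        Set.sub_subset_sub Set.inter_subset_right Set.inter_subset_right
    _ = t - t := by rw [Set.vadd_sub_vadd_comm, sub_self, zero_vadd]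

section DeltaBar

variable {G : Type*} [AddCommGroup G]

lemma bddAbove_deltaBarSet [Finite G] (A : Set G) :
    BddAbove {n | ∃ B : Finset G, ((B : Set G) - (B : Set G)) ⊆ A ∧ B.card = n} := by
  have := Fintype.ofFinite G
  exact ⟨Fintype.card G, by rintro n ⟨B, -, rfl⟩; exact B.card_le_univ⟩

lemma card_le_deltaBar [Finite G] {A : Set G} {B : Finset G} (hB : (B : Set G) - B ⊆ A) :
    #B ≤ DeltaBar A :=
  le_csSup (bddAbove_deltaBarSet A) ⟨B, hB, rfl⟩

lemma exists_card_eq_deltaBar [Finite G] (A : Set G) :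
    ∃ B : Finset G, (B : Set G) - B ⊆ A ∧ #B = DeltaBar A :=
  Nat.sSup_mem (s := {n | ∃ B : Finset G, ((B : Set G) - (B : Set G)) ⊆ A ∧ B.card = n})
    ⟨0, ∅, by simp, rfl⟩ (bddAbove_deltaBarSet A)

lemma deltaBar_mono [Finite G] {A A' : Set G} (h : A ⊆ A') : DeltaBar A ≤ DeltaBar A' := by
  obtain ⟨B, hB, hcard⟩ := exists_card_eq_deltaBar A
  exact hcard ▸ card_le_deltaBar (hB.trans h)

lemma deltaBar_mul_deltaBar_le_card_mul_deltaBar_inter [Fintype G] (A₁ A₂ : Set G) :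
    DeltaBar A₁ * DeltaBar A₂ ≤ Fintype.card G * DeltaBar (A₁ ∩ A₂) := by
  classical
  obtain ⟨B₁, hB₁, hcard₁⟩ := exists_card_eq_deltaBar A₁
  obtain ⟨B₂, hB₂, hcard₂⟩ := exists_card_eq_deltaBar A₂
  rw [← hcard₁, ← hcard₂]
  obtain ⟨x, hx⟩ := exists_card_mul_card_le_card_mul_card_inter_vadd B₁ B₂
  refine hx.trans (Nat.mul_le_mul_left _ (card_le_deltaBar ?_))
  push_cast
  exact (Set.inter_vadd_sub_inter_vadd_subset _ _ x).trans (Set.inter_subset_inter hB₁ hB₂)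

end DeltaBar

theorem stmt10_general {G : Type*} [AddCommGroup G] [Fintype G]
    (A₁ A₂ : Set G) :
    deltaU (A₁ ∩ A₂) ≤ (Fintype.card G : ℝ) * deltaU A₁ * deltaU A₂ ∧
    (DeltaBar A₁ : ℝ) * (DeltaBar A₂ : ℝ) / (Fintype.card G : ℝ) ≤ (DeltaBar (A₁ ∩ A₂) : ℝ) := by
  have key : (DeltaBar A₁ : ℝ) * DeltaBar A₂ ≤ Fintype.card G * DeltaBar (A₁ ∩ A₂) := by
    exact_mod_cast deltaBar_mul_deltaBar_le_card_mul_deltaBar_inter A₁ A₂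
  have hq : (0 : ℝ) < Fintype.card G := by exact_mod_cast Fintype.card_pos
  refine ⟨?_, by rwa [div_le_iff₀ hq, mul_comm _ (Fintype.card G : ℝ)]⟩
  unfold deltaU
  -- `deltaU` of a set with `DeltaBar = 0` is the junk value `1 / 0 = 0`.
  rcases (DeltaBar (A₁ ∩ A₂)).eq_zero_or_pos with h | h
  · rw [h, Nat.cast_zero, div_zero]
    positivity
  have h₁ : (0 : ℝ) < DeltaBar A₁ := by
    exact_mod_cast h.trans_le (deltaBar_mono Set.inter_subset_left)
  have h₂ : (0 : ℝ) < DeltaBar A₂ := by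
    exact_mod_cast h.trans_le (deltaBar_mono Set.inter_subset_right)
  rw [div_le_iff₀ (by exact_mod_cast h)]
  field_simp
  linarith

theorem stmt10 {G : Type*} [AddCommGroup G] [Fintype G]
    (A₁ A₂ : Set G) (h₁ : IsStandard A₁) (h₂ : IsStandard A₂) :
    deltaU (A₁ ∩ A₂) ≤ (Fintype.card G : ℝ) * deltaU A₁ * deltaU A₂ ∧
    (DeltaBar A₁ : ℝ) * (DeltaBar A₂ : ℝ) / (Fintype.card G : ℝ) ≤ (DeltaBar (A₁ ∩ A₂) : ℝ) :=
  stmt10_general A₁ A₂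
end
end

section
/- Let G be a finite commutative group with |G| = q, and let A₁, A₂ ⊆ G be standard sets. Then δ(A₁ ∪ A₂) ≥ δ(A₁) · δ(A₂); equivalently, q · Δ(A₁ ∪ A₂) ≥ Δ(A₁) · Δ(A₂). -/
open scoped Pointwise ComplexOrder

noncomputable section

/-! Take `B₁`, `B₂` of maximal size for `A₁`, `A₂`. Averaging over `g`, some translate `g - B₂`
meets `B₁` in at least `|B₁| |B₂| / q` points. Differences inside `B₁ ∩ (g - B₂)` are differences
both of `B₁` and of `B₂`, so they meet `A₁ ∪ A₂` only in `0`. -/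

open Finset

section Differences

variable {G : Type*} [AddCommGroup G]

theorem inter_vadd_neg_sub_self_subset (S T : Set G) (g : G) :
    (S ∩ (g +ᵥ -T)) - (S ∩ (g +ᵥ -T)) ⊆ (S - S) ∩ (T - T) := by
  rintro _ ⟨a, ⟨haS, t, ht, rfl⟩, b, ⟨hbS, t', ht', rfl⟩, rfl⟩
  refine ⟨⟨_, haS, _, hbS, rfl⟩, -t', ht', -t, ht, ?_⟩
  simp only [vadd_eq_add]
  abel

theorem inter_vadd_neg_sub_self_inter_union_subset_zero {S T A₁ A₂ : Set G}
    (hS : (S - S) ∩ A₁ ⊆ {0}) (hT : (T - T) ∩ A₂ ⊆ {0}) (g : G) :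
    ((S ∩ (g +ᵥ -T)) - (S ∩ (g +ᵥ -T))) ∩ (A₁ ∪ A₂) ⊆ {0} := by
  rintro x ⟨hx, hx₁ | hx₂⟩
  exacts [hS ⟨(inter_vadd_neg_sub_self_subset S T g hx).1, hx₁⟩,
    hT ⟨(inter_vadd_neg_sub_self_subset S T g hx).2, hx₂⟩]

end Differences

section Delta

variable {G : Type*} [AddCommGroup G] [Finite G]

theorem bddAbove_delta_set (A : Set G) :
    BddAbove {n | ∃ B : Finset G, ((B : Set G) - (B : Set G)) ∩ A = {0} ∧ B.card = n} := by
  have := Fintype.ofFinite G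
  refine ⟨Fintype.card G, ?_⟩
  rintro _ ⟨B, -, rfl⟩
  exact B.card_le_univ

theorem exists_card_eq_delta {A : Set G} (h0 : (0 : G) ∈ A) :
    ∃ B : Finset G, ((B : Set G) - (B : Set G)) ∩ A = {0} ∧ B.card = Delta A := by
  refine Nat.sSup_mem ?_ (bddAbove_delta_set A)
  exact ⟨1, {0}, by simpa using h0, card_singleton 0⟩

theorem card_le_delta {A : Set G} {B : Finset G}
    (hB : ((B : Set G) - (B : Set G)) ∩ A ⊆ {0}) (h0 : (0 : G) ∈ A) : B.card ≤ Delta A := by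
  obtain rfl | ⟨b, hb⟩ := B.eq_empty_or_nonempty
  · exact Nat.zero_le _
  refine le_csSup (bddAbove_delta_set A) ⟨B, hB.antisymm ?_, rfl⟩
  rintro _ rfl
  exact ⟨⟨b, hb, b, hb, sub_self b⟩, h0⟩

end Delta

theorem exists_card_mul_card_le_card_mul_card_inter_vadd_neg {G : Type*} [AddGroup G] [Fintype G]
    [DecidableEq G] (B₁ B₂ : Finset G) :
    ∃ g : G, (B₁.card * B₂.card : ℝ) ≤ Fintype.card G * (B₁ ∩ (g +ᵥ -B₂)).card := by
  -- `|B₁ ∩ (g - B₂)|` counts the pairs of `B₁ × B₂` with sum `g`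
  obtain ⟨g, -, hg⟩ := exists_le_card_fiber_of_nsmul_le_card_of_maps_to
    (s := B₁ ×ˢ B₂) (f := fun p => p.1 + p.2) (fun _ _ => mem_univ _) univ_nonempty
    (b := (B₁.card * B₂.card : ℝ) / Fintype.card G) (by
      rw [nsmul_eq_mul, card_univ, mul_div_cancel₀ _ (by positivity), card_product, Nat.cast_mul])
  refine ⟨g, ?_⟩
  rw [card_inter_vadd_neg, ← card_add_eq]
  rwa [div_le_iff₀' (by positivity)] at hg

theorem mul_delta_le_card_mul_delta_union {G : Type*} [AddCommGroup G] [Fintype G]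
    {A₁ A₂ : Set G} (h₁ : (0 : G) ∈ A₁) (h₂ : (0 : G) ∈ A₂) :
    (Delta A₁ * Delta A₂ : ℝ) ≤ Fintype.card G * Delta (A₁ ∪ A₂) := by
  classical
  obtain ⟨B₁, hB₁, hc₁⟩ := exists_card_eq_delta h₁
  obtain ⟨B₂, hB₂, hc₂⟩ := exists_card_eq_delta h₂
  obtain ⟨g, hg⟩ := exists_card_mul_card_le_card_mul_card_inter_vadd_neg B₁ B₂
  calc (Delta A₁ * Delta A₂ : ℝ) ≤ Fintype.card G * (B₁ ∩ (g +ᵥ -B₂)).card := by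
        rwa [← hc₁, ← hc₂]
    _ ≤ Fintype.card G * Delta (A₁ ∪ A₂) := by
        gcongr
        refine card_le_delta ?_ (Or.inl h₁)
        push_cast
        exact inter_vadd_neg_sub_self_inter_union_subset_zero hB₁.le hB₂.le g

theorem stmt11 {G : Type*} [AddCommGroup G] [Fintype G]
    (A₁ A₂ : Set G) (h₁ : IsStandard A₁) (h₂ : IsStandard A₂) :
    deltaL A₁ * deltaL A₂ ≤ deltaL (A₁ ∪ A₂) ∧
    (Delta A₁ : ℝ) * (Delta A₂ : ℝ) ≤ (Fintype.card G : ℝ) * (Delta (A₁ ∪ A₂) : ℝ) := by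
  have hmain := mul_delta_le_card_mul_delta_union h₁.2 h₂.2
  refine ⟨?_, hmain⟩
  have hq : (0 : ℝ) < Fintype.card G := by exact_mod_cast Fintype.card_pos
  rw [deltaL, deltaL, deltaL, div_mul_div_comm, div_le_div_iff₀ (by positivity) hq]
  nlinarith
end
end

section
/- Let A be a finite set of cardinality m in a commutative group, and let k be an integer with 1 ≤ k ≤ √m. Then there exists a subset B ⊆ A with |B| = k satisfying |B−B| ≥ 1 + (k(k−1)/2) · (1 − k(k−1)/(2m)). -/
open scoped Pointwise ComplexOrder

noncomputable section

/-! Greedy construction: given `B` with difference set `D = B - B`, an element `a ∈ A` adds the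
new differences `a - b ∉ D`, `b ∈ B`. On average over `a ∈ A` at most `|B| |D| / |A| ≤ |B|³ / |A|`
of the `|B|` differences `a - b` already lie in `D`, so some `a` gains at least
`|B| - |B|³ / |A|` differences. Starting from a singleton and summing these gains for
`|B| = 1, …, k - 1` gives exactly `1 + T (1 - T / |A|)` with `T = k (k - 1) / 2`. -/

open Finset

section GreedyStep

variable {G : Type*} [AddCommGroup G] [DecidableEq G]

theorem card_filter_sub_mem_le (A D : Finset G) (b : G) :
    #(A.filter fun a => a - b ∈ D) ≤ #D :=
  card_le_card_of_injOn (· - b) (fun _ ha => (mem_filter.mp ha).2)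
    (fun _ _ _ _ h => sub_left_injective h)

theorem sum_card_filter_sub_mem_le (A B D : Finset G) :
    ∑ a ∈ A, #(B.filter fun b => a - b ∈ D) ≤ #B * #D := by
  calc ∑ a ∈ A, #(B.filter fun b => a - b ∈ D)
      = ∑ b ∈ B, #(A.filter fun a => a - b ∈ D) := by
        simp only [card_filter]
        exact sum_comm
    _ ≤ ∑ _b ∈ B, #D := sum_le_sum fun b _ => card_filter_sub_mem_le A D b
    _ = #B * #D := by rw [sum_const, smul_eq_mul]

theorem exists_mul_card_filter_sub_mem_le {A : Finset G} (hA : A.Nonempty) (B D : Finset G) :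
    ∃ a ∈ A, #A * #(B.filter fun b => a - b ∈ D) ≤ #B * #D :=
  exists_le_of_sum_le hA <| by
    rw [← mul_sum, sum_const, smul_eq_mul]
    exact Nat.mul_le_mul_left _ (sum_card_filter_sub_mem_le A B D)

theorem card_sub_add_card_le (a : G) (B : Finset G) :
    #(B - B) + #B ≤ #(insert a B - insert a B) + #(B.filter fun b => a - b ∈ B - B) := by
  set D := B - B
  set S := (B.filter fun b => a - b ∉ D).image (a - ·)
  have hDS : Disjoint D S := by
    rw [disjoint_right]
    intro x hx
    obtain ⟨b, hb, rfl⟩ := mem_image.mp hx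
    exact (mem_filter.mp hb).2
  have hsub : D ∪ S ⊆ insert a B - insert a B := by
    refine union_subset (sub_subset_sub (subset_insert a B) (subset_insert a B)) ?_
    intro x hx
    obtain ⟨b, hb, rfl⟩ := mem_image.mp hx
    exact sub_mem_sub (mem_insert_self a B) (mem_insert_of_mem (mem_filter.mp hb).1)
  calc #D + #B = #D + #S + #(B.filter fun b => a - b ∈ D) := by
        rw [card_image_of_injective _ sub_right_injective,
          ← card_filter_add_card_filter_not (s := B) (fun b => a - b ∈ D)]
        ring
    _ = #(D ∪ S) + #(B.filter fun b => a - b ∈ D) := by rw [card_union_of_disjoint hDS]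
    _ ≤ #(insert a B - insert a B) + #(B.filter fun b => a - b ∈ D) :=
        Nat.add_le_add_right (card_le_card hsub) _

theorem exists_notMem_card_sub_le_card_insert_sub {A B : Finset G} (h : #B ^ 2 < #A) :
    ∃ a ∈ A, a ∉ B ∧
      (#(B - B) : ℝ) + #B - (#B : ℝ) ^ 3 / #A ≤ #(insert a B - insert a B) := by
  have hA : A.Nonempty := card_pos.mp (by omega)
  obtain ⟨a, haA, hc⟩ := exists_mul_card_filter_sub_mem_le hA B (B - B)
  set c := #(B.filter fun b => a - b ∈ B - B)
  have hc3 : #A * c ≤ #B ^ 3 :=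
    calc #A * c ≤ #B * #(B - B) := hc
      _ ≤ #B * (#B * #B) := Nat.mul_le_mul_left _ card_sub_le
      _ = #B ^ 3 := by ring
  -- For `a ∈ B` all `|B|` differences `a - b` lie in `D`, but `c ≤ |B|³ / |A| < |B|`.
  have haB : a ∉ B := by
    intro haB
    have hcB : c = #B := congrArg card (filter_true_of_mem fun b hb => sub_mem_sub haB hb)
    have hB : 0 < #B := card_pos.mpr ⟨a, haB⟩
    rw [hcB] at hc3
    nlinarith
  refine ⟨a, haA, haB, ?_⟩
  have hAR : (0 : ℝ) < #A := by exact_mod_cast hA.card_pos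
  have hcR : (c : ℝ) ≤ (#B : ℝ) ^ 3 / #A := by
    rw [le_div_iff₀ hAR]
    exact_mod_cast (mul_comm c #A).trans_le hc3
  have hgain : (#(B - B) : ℝ) + #B ≤ #(insert a B - insert a B) + c := by
    exact_mod_cast card_sub_add_card_le a B
  linarith

theorem exists_subset_card_eq_le_card_sub (A : Finset G) {k : ℕ} (hk : 1 ≤ k)
    (hkA : k ^ 2 ≤ #A) :
    ∃ B ⊆ A, #B = k ∧
      (1 : ℝ) + (k * (k - 1) / 2) * (1 - k * (k - 1) / (2 * #A)) ≤ #(B - B) := by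
  induction k, hk using Nat.le_induction with
  | base =>
    obtain ⟨a, ha⟩ := card_pos.mp (by omega : 0 < #A)
    exact ⟨{a}, singleton_subset_iff.mpr ha, card_singleton a, by simp⟩
  | succ k hk ih =>
    obtain ⟨B, hBA, hB, hbound⟩ := ih (le_trans (Nat.pow_le_pow_left k.le_succ 2) hkA)
    have hlt : #B ^ 2 < #A := by
      rw [hB]
      exact lt_of_lt_of_le (Nat.pow_lt_pow_left k.lt_succ_self (by norm_num)) hkA
    obtain ⟨a, haA, haB, hstep⟩ := exists_notMem_card_sub_le_card_insert_sub hlt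
    refine ⟨insert a B, insert_subset haA hBA, by rw [card_insert_of_notMem haB, hB], ?_⟩
    rw [hB] at hstep
    have hAR : (0 : ℝ) < #A := by exact_mod_cast (show 0 < #A by omega)
    have hrec : (1 : ℝ) + ((k + 1 : ℕ) * ((k + 1 : ℕ) - 1) / 2) *
          (1 - (k + 1 : ℕ) * ((k + 1 : ℕ) - 1) / (2 * #A))
        = 1 + (k * (k - 1) / 2) * (1 - k * (k - 1) / (2 * #A)) + k - (k : ℝ) ^ 3 / #A := by
      push_cast
      field_simp
      ring
    linarith

end GreedyStep

theorem stmt18 {G : Type*} [AddCommGroup G] [DecidableEq G]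
    (A : Finset G) (m : ℕ) (hm : A.card = m)
    (k : ℕ) (hk1 : 1 ≤ k) (hk2 : (k : ℝ) ≤ Real.sqrt m) :
    ∃ B : Finset G, B ⊆ A ∧ B.card = k ∧
      (1 : ℝ) + (k * (k - 1) / 2) * (1 - k * (k - 1) / (2 * m)) ≤ ((B - B).card : ℝ) := by
  subst hm
  have hkA : k ^ 2 ≤ #A := by
    exact_mod_cast (Real.le_sqrt (Nat.cast_nonneg k) (Nat.cast_nonneg _)).mp hk2
  exact exists_subset_card_eq_le_card_sub A hk1 hkA
end
end
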